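/- For all n ≥ 1, Q(n) = ∑_{d|n} μ(d) Q̂(n/d), where μ is the Möbius function. -/

import Mathlib

open ArithmeticFunction in
/-- `Q n`: the number of partitions of `n` into distinct parts. -/
def Q (n : ℕ) : ℕ := (Nat.Partition.distincts n).card

/-- `Qhat n`: the number of partitions of `n` in which every part occurs with
the same multiplicity. -/
def Qhat (n : ℕ) : ℕ :=
  (Finset.univ.filter fun p : Nat.Partition n =>
    ∀ i ∈ p.parts, ∀ j ∈ p.parts, p.parts.count i = p.parts.count j).card

/-!
If every part of a partition of `m` occurs exactly `c` times, the partition is `c` copies of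
its set of distinct parts, which is a partition of `k = m / c` into distinct parts; conversely,
`c` copies of a distinct-part partition of `k ∣ m` with `c = m / k` have equal multiplicities.
Hence `Qhat m = ∑_{k ∣ m} Q k` for `m ≥ 1`, and Möbius inversion gives the theorem.
-/

open Finset

theorem Multiset.exists_eq_nsmul_dedup {α : Type*} [DecidableEq α] {s : Multiset α}
    (h : ∀ a ∈ s, ∀ b ∈ s, s.count a = s.count b) : ∃ c : ℕ, s = c • s.dedup := by
  rcases s.empty_or_exists_mem with rfl | ⟨a, ha⟩
  · exact ⟨0, by simp⟩
  refine ⟨s.count a, Multiset.ext.mpr fun b => ?_⟩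
  rw [Multiset.count_nsmul, Multiset.count_dedup]
  by_cases hb : b ∈ s
  · rw [if_pos hb, h b hb a ha, mul_one]
  · rw [if_neg hb, mul_zero, Multiset.count_eq_zero_of_notMem hb]

namespace Nat.Partition

def nsmul {k : ℕ} (d : ℕ) (q : k.Partition) {m : ℕ} (h : d * k = m) : m.Partition where
  parts := d • q.parts
  parts_pos hi := q.parts_pos (Multiset.mem_of_mem_nsmul hi)
  parts_sum := by rw [Multiset.sum_nsmul, q.parts_sum, smul_eq_mul, h]

def dedup {m : ℕ} (p : m.Partition) {k : ℕ} (h : p.parts.dedup.sum = k) : k.Partition where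
  parts := p.parts.dedup
  parts_pos hi := p.parts_pos (Multiset.mem_dedup.mp hi)
  parts_sum := h

theorem exists_parts_eq_nsmul_dedup {m : ℕ} {p : m.Partition}
    (h : ∀ i ∈ p.parts, ∀ j ∈ p.parts, p.parts.count i = p.parts.count j) :
    ∃ c : ℕ, p.parts = c • p.parts.dedup ∧ m = c * p.parts.dedup.sum := by
  obtain ⟨c, hc⟩ := Multiset.exists_eq_nsmul_dedup h
  refine ⟨c, hc, ?_⟩
  calc m = p.parts.sum := p.parts_sum.symm
    _ = c * p.parts.dedup.sum := by conv_lhs => rw [hc, Multiset.sum_nsmul, smul_eq_mul]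

theorem card_filter_dedup_sum_eq {m k : ℕ} (hk : k ∈ m.divisors) :
    #{p : m.Partition | (∀ i ∈ p.parts, ∀ j ∈ p.parts, p.parts.count i = p.parts.count j) ∧
      p.parts.dedup.sum = k} = #(distincts k) := by
  obtain ⟨⟨c, rfl⟩, hm⟩ := Nat.mem_divisors.mp hk
  have hc : c ≠ 0 := right_ne_zero_of_mul hm
  have hk0 : k ≠ 0 := left_ne_zero_of_mul hm
  refine card_bij' (fun p hp => dedup p (mem_filter.mp hp).2.2)
    (fun q _ => nsmul c q (mul_comm c k)) (fun p _ => ?_) (fun q hq => ?_)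
    (fun p hp => ?_) (fun q hq => ?_)
  · exact mem_filter.mpr ⟨mem_univ _, Multiset.nodup_dedup _⟩
  · have hq : q.parts.Nodup := (mem_filter.mp hq).2
    refine mem_filter.mpr ⟨mem_univ _, fun i hi j hj => ?_, ?_⟩
    · simp only [nsmul, Multiset.count_nsmul,
        Multiset.count_eq_one_of_mem hq (Multiset.mem_of_mem_nsmul hi),
        Multiset.count_eq_one_of_mem hq (Multiset.mem_of_mem_nsmul hj)]
    · rw [nsmul, Multiset.dedup_nsmul hc, hq.dedup, q.parts_sum]
  · obtain ⟨hequi, hsum⟩ := (mem_filter.mp hp).2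
    obtain ⟨c', hparts, hm'⟩ := exists_parts_eq_nsmul_dedup hequi
    obtain rfl : c = c' := Nat.eq_of_mul_eq_mul_left (Nat.pos_of_ne_zero hk0)
      (by rw [hm', hsum, mul_comm])
    exact Nat.Partition.ext hparts.symm
  · ext1
    change (c • q.parts).dedup = q.parts
    rw [Multiset.dedup_nsmul hc, (mem_filter.mp hq).2.dedup]

end Nat.Partition

theorem Qhat_eq_sum_divisors {m : ℕ} (hm : m ≠ 0) : Qhat m = ∑ k ∈ m.divisors, Q k := by
  classical
  rw [Qhat, card_eq_sum_card_fiberwise (f := fun p : m.Partition => p.parts.dedup.sum)]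
  · refine sum_congr rfl fun k hk => ?_
    rw [filter_filter]
    exact Nat.Partition.card_filter_dedup_sum_eq hk
  · intro p hp
    obtain ⟨c, -, hc⟩ := Nat.Partition.exists_parts_eq_nsmul_dedup (mem_filter.mp hp).2
    exact Nat.mem_divisors.mpr ⟨Dvd.intro_left c hc.symm, hm⟩

open ArithmeticFunction ArithmeticFunction.Moebius in
theorem Q_eq_moebius_inversion (n : ℕ) (hn : 1 ≤ n) :
    (Q n : ℤ) = ∑ d ∈ n.divisors, μ d * Qhat (n / d) := by
  have hsum : ∀ m > 0, ∑ k ∈ m.divisors, (Q k : ℤ) = Qhat m := fun m hm => by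
    exact_mod_cast (Qhat_eq_sum_divisors hm.ne').symm
  rw [← sum_eq_iff_sum_mul_moebius_eq.mp hsum n hn]
  simp only [Int.cast_id]
  exact Nat.sum_divisorsAntidiagonal fun d e => μ d * (Qhat e : ℤ)
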